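/- Fix a finite multiset M of positive integers with |M| ≥ 2. There exists an involution Ψ on 𝒯_M such that for every T ∈ 𝒯_M: snuleaf(Ψ(T)) = snuleaf(T), etleaf(Ψ(T)) = etleaf(T), syleaf(Ψ(T)) = syleaf(T), yerleaf(Ψ(T)) = yerleaf(T), yint(Ψ(T)) = yint(T), and suleaf(Ψ(T)) = entleaf(T) (hence also entleaf(Ψ(T)) = suleaf(T)). In particular, Ψ restricts to an involution on 𝒜_M = {T ∈ 𝒯_M : yint(T) = 0}. -/

import Mathlib

/-- Labeled plane trees: a node with a label in `ℕ` and a (left-to-right ordered)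
list of children. -/
inductive LTree : Type where
  | node : ℕ → List LTree → LTree

namespace LTree

/-- The label of the root. -/
def label : LTree → ℕ
  | node a _ => a

/-- The list of children of the root, from left to right. -/
def children : LTree → List LTree
  | node _ cs => cs

/-- A tree consisting of a single node is a leaf. -/
def isLeaf (t : LTree) : Bool := t.children.isEmpty

/-- The list of all subtrees (i.e. all nodes) of a tree. -/
def subtrees : LTree → List LTree
  | node a cs => node a cs :: (cs.attach.map (fun c => subtrees c.1)).flatten
decreasing_by
  simp only [LTree.node.sizeOf_spec]
  have := List.sizeOf_lt_of_mem c.2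
  omega

/-- The multiset of labels of all nodes of a tree. -/
def labels (T : LTree) : Multiset ℕ := (T.subtrees.map label : List ℕ)

/-- `T` is a weakly increasing tree on the multiset `M`: the root is labeled `0`,
the multiset of labels is `M ∪ {0}`, labels weakly increase along root-to-leaf paths,
and the labels of the children of each node weakly increase from right to left. -/
def IsWIT (M : Multiset ℕ) (T : LTree) : Prop :=
  T.label = 0 ∧ T.labels = 0 ::ₘ M ∧
  ∀ t ∈ T.subtrees, (∀ c ∈ t.children, t.label ≤ c.label) ∧
    List.Chain' (fun a b => b ≤ a) (t.children.map label)

/-- `T` is (an encoding of) a plane tree with `n` edges: all labels are zero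
and there are `n + 1` nodes. -/
def IsPlane (n : ℕ) (T : LTree) : Prop :=
  (∀ t ∈ T.subtrees, t.label = 0) ∧ T.subtrees.length = n + 1

/-- The number of singleton leaves: leaves that are the only child of their parent. -/
def sleaf (T : LTree) : ℕ :=
  T.subtrees.countP (fun t => match t.children with
    | [c] => c.isLeaf
    | _ => false)

/-- The number of elder leaves: leaves that are the leftmost child of their parent
and have siblings. -/
def eleaf (T : LTree) : ℕ :=
  T.subtrees.countP (fun t => match t.children with
    | c :: _ :: _ => c.isLeaf
    | _ => false)

/-- The number of young leaves: leaves that are not the leftmost child of their parent. -/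
def yleaf (T : LTree) : ℕ :=
  (T.subtrees.map (fun t => t.children.tail.countP isLeaf)).sum

/-- The number of young internal nodes: internal nodes whose leftmost child is internal. -/
def yint (T : LTree) : ℕ :=
  T.subtrees.countP (fun t => match t.children with
    | c :: _ => !c.isLeaf
    | _ => false)

/-- The number of singleton internal nodes: parents of a singleton leaf. -/
def sint (T : LTree) : ℕ :=
  T.subtrees.countP (fun t => match t.children with
    | [c] => c.isLeaf
    | _ => false)

/-- The number of elder internal nodes: parents of an elder leaf. -/
def eint (T : LTree) : ℕ :=
  T.subtrees.countP (fun t => match t.children with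
    | c :: _ :: _ => c.isLeaf
    | _ => false)

/-- The number of old leaves: leaves that are the leftmost child of their parent. -/
def oleaf (T : LTree) : ℕ := sleaf T + eleaf T

/-- The number of old internal nodes. -/
def oint (T : LTree) : ℕ := sint T + eint T

/-- Whether the root of `t` is the parent of a singleton leaf. -/
def isSingletonParent (t : LTree) : Bool :=
  match t.children with
  | [c] => c.isLeaf
  | _ => false

/-- The number of singleton leaves with uncle: singleton leaves whose parent has an
elder sibling (a sibling to its left). -/
def suleaf (T : LTree) : ℕ :=
  (T.subtrees.map (fun g => g.children.tail.countP isSingletonParent)).sum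

/-- The number of singleton leaves with no uncle: singleton leaves whose parent has no
elder sibling (the parent is the root or a leftmost child). -/
def snuleaf (T : LTree) : ℕ :=
  (if T.isSingletonParent then 1 else 0) +
    (T.subtrees.map (fun g => match g.children with
      | c :: _ => if c.isSingletonParent then 1 else 0
      | [] => 0)).sum

/-- The number of elder twin leaves: elder leaves such that the second child of their
parent is also a leaf. -/
def etleaf (T : LTree) : ℕ :=
  T.subtrees.countP (fun t => match t.children with
    | c :: d :: _ => c.isLeaf && d.isLeaf
    | _ => false)

/-- The number of elder non-twin leaves: elder leaves such that the second child of
their parent is not a leaf. -/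
def entleaf (T : LTree) : ℕ :=
  T.subtrees.countP (fun t => match t.children with
    | c :: d :: _ => c.isLeaf && !d.isLeaf
    | _ => false)

/-- The number of second leaves: young leaves that are the second child of their parent. -/
def syleaf (T : LTree) : ℕ :=
  T.subtrees.countP (fun t => match t.children with
    | _ :: d :: _ => d.isLeaf
    | _ => false)

/-- The number of younger leaves: young leaves that are not the second child of their
parent. -/
def yerleaf (T : LTree) : ℕ :=
  (T.subtrees.map (fun t => (t.children.drop 2).countP isLeaf)).sum

end LTree

/-!
`Ψ` (here `LTree.psi`) acts on every node through its list of children, recursively. If some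
child other than the leftmost one is the parent `node b [ℓ]` of a singleton leaf, the list splits
as `c :: P ++ node b [ℓ] :: R` at the last such child; `ℓ` moves to the front and `node b [ℓ]`
becomes the second child, adopting the images of `c :: P`: a singleton leaf with uncle becomes an
elder non-twin leaf. Otherwise, if the leftmost child `c` is a leaf and the second one
`node b es` is internal, the inverse move lifts the images of `es` to the front and leaves
`node b [c]` behind. Otherwise `Ψ` just recurses into every child.

The two moves undo each other, and `Ψ` preserves the labels and their monotonicity, leaves and
singleton parents, so it is an involution on weakly increasing trees. Each statistic is a sum over
the nodes of a function of the children list, so its transfer under `Ψ` reduces to a check on each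
of the three cases.
-/

theorem List.isChain_flip_le_append_singleton_iff {α : Type*} [Preorder α] {l : List α} {a : α} :
    (l ++ [a]).IsChain (fun x y => y ≤ x) ↔ (∀ x ∈ l, a ≤ x) ∧ l.IsChain (fun x y => y ≤ x) := by
  rw [List.isChain_iff_pairwise, List.isChain_iff_pairwise, List.pairwise_append]
  simp [and_comm]

namespace LTree

@[simp] theorem label_node (a : ℕ) (cs : List LTree) : (node a cs).label = a := rfl

@[simp] theorem children_node (a : ℕ) (cs : List LTree) : (node a cs).children = cs := rfl

@[simp] theorem node_label_children (t : LTree) : node t.label t.children = t := by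
  cases t; rfl

@[simp] theorem isLeaf_node (a : ℕ) (cs : List LTree) : (node a cs).isLeaf = cs.isEmpty := rfl

@[simp] theorem isSingletonParent_node_nil (b : ℕ) : (node b []).isSingletonParent = false := rfl

@[simp] theorem isSingletonParent_node_singleton (b : ℕ) (ℓ : LTree) :
    (node b [ℓ]).isSingletonParent = ℓ.isLeaf := rfl

@[simp] theorem isSingletonParent_node_cons_cons (b : ℕ) (x y : LTree) (l : List LTree) :
    (node b (x :: y :: l)).isSingletonParent = false := rfl

theorem isSingletonParent_eq_false_of_isLeaf {t : LTree} (h : t.isLeaf = true) :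
    t.isSingletonParent = false := by
  rcases t with ⟨a, _ | _⟩
  · rfl
  · simp at h

theorem sizeOf_lt_sizeOf_node {x : LTree} {cs : List LTree} (a : ℕ) (h : x ∈ cs) :
    sizeOf x < sizeOf (node a cs) := by
  have := List.sizeOf_lt_of_mem h
  simp only [node.sizeOf_spec]
  omega

theorem sizeOf_node_lt_sizeOf_node (a b : ℕ) (c ℓ : LTree) (P R : List LTree) :
    sizeOf (node b (c :: P)) < sizeOf (node a (c :: (P ++ node b [ℓ] :: R))) := by
  induction P <;> simp_all <;> omega

def splitAtLastSingletonParent : List LTree → Option (List LTree × ℕ × LTree × List LTree)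
  | [] => none
  | x :: xs =>
    match splitAtLastSingletonParent xs, x with
    | some (P, b, ℓ, R), _ => some (x :: P, b, ℓ, R)
    | none, node b [ℓ] => if ℓ.isLeaf then some ([], b, ℓ, xs) else none
    | none, _ => none

theorem splitAtLastSingletonParent_eq_none_iff {l : List LTree} :
    splitAtLastSingletonParent l = none ↔ ∀ x ∈ l, x.isSingletonParent = false := by
  induction l with
  | nil => simp [splitAtLastSingletonParent]
  | cons x xs ih =>
    rcases x with ⟨b, _ | ⟨ℓ, _ | _⟩⟩ <;> cases h : splitAtLastSingletonParent xs <;>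
      simp_all [splitAtLastSingletonParent]

theorem splitAtLastSingletonParent_eq_some_iff {l P R : List LTree} {b : ℕ} {ℓ : LTree} :
    splitAtLastSingletonParent l = some (P, b, ℓ, R) ↔
      l = P ++ node b [ℓ] :: R ∧ ℓ.isLeaf = true ∧ ∀ x ∈ R, x.isSingletonParent = false := by
  constructor
  · induction l generalizing P with
    | nil => simp [splitAtLastSingletonParent]
    | cons x xs ih =>
      rcases h : splitAtLastSingletonParent xs with _ | ⟨P', b', ℓ', R'⟩
      · rcases x with ⟨b, _ | ⟨ℓ, _ | _⟩⟩ <;>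
          simp only [splitAtLastSingletonParent, h, reduceCtorEq, IsEmpty.forall_iff,
            Option.ite_none_right_eq_some, Option.some.injEq, Prod.mk.injEq, and_imp]
        rintro hℓ rfl rfl rfl rfl
        exact ⟨rfl, hℓ, splitAtLastSingletonParent_eq_none_iff.1 h⟩
      · simp only [splitAtLastSingletonParent, h, Option.some.injEq, Prod.mk.injEq]
        rintro ⟨rfl, rfl, rfl, rfl⟩
        obtain ⟨rfl, hℓ, hR⟩ := ih h
        exact ⟨rfl, hℓ, hR⟩
  · rintro ⟨rfl, hℓ, hR⟩
    induction P with
    | nil => simp [splitAtLastSingletonParent, splitAtLastSingletonParent_eq_none_iff.2 hR, hℓ]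
    | cons x P ih => simp [splitAtLastSingletonParent, ih]

def entleafAt : List LTree → Bool
  | c :: d :: _ => c.isLeaf && !d.isLeaf
  | _ => false

def psi : LTree → LTree
  | node a [] => node a []
  | node a (c :: rest) =>
    match _hsplit : splitAtLastSingletonParent rest with
    | some (P, b, ℓ, R) => node a (ℓ :: psi (node b (c :: P)) :: R.attach.map (fun r => psi r.1))
    | none =>
      match rest with
      | node b (e :: es) :: R =>
        if c.isLeaf then
          node a ((psi (node b (e :: es))).children ++
            node b [c] :: R.attach.map (fun r => psi r.1))
        else node a ((c :: node b (e :: es) :: R).attach.map (fun r => psi r.1))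
      | rest => node a ((c :: rest).attach.map (fun r => psi r.1))
termination_by t => sizeOf t
decreasing_by
  · rw [(splitAtLastSingletonParent_eq_some_iff.1 _hsplit).1]
    exact sizeOf_node_lt_sizeOf_node ..
  · rw [(splitAtLastSingletonParent_eq_some_iff.1 _hsplit).1]
    exact sizeOf_lt_sizeOf_node a (by simp [r.2])
  · exact sizeOf_lt_sizeOf_node a (by simp)
  · exact sizeOf_lt_sizeOf_node a (by simp [r.2])
  · exact sizeOf_lt_sizeOf_node a r.2
  · exact sizeOf_lt_sizeOf_node a r.2

theorem psi_induction {motive : LTree → Prop}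
    (split : ∀ a c P b ℓ R, ℓ.isLeaf = true → (∀ x ∈ R, x.isSingletonParent = false) →
      motive (node b (c :: P)) → (∀ r ∈ R, motive r) →
      motive (node a (c :: (P ++ node b [ℓ] :: R))))
    (lift : ∀ a c b es R, c.isLeaf = true → es ≠ [] →
      (∀ x ∈ node b es :: R, x.isSingletonParent = false) →
      motive (node b es) → (∀ r ∈ R, motive r) → motive (node a (c :: node b es :: R)))
    (plain : ∀ a cs, (∀ x ∈ cs.tail, x.isSingletonParent = false) → entleafAt cs = false →
      (∀ c ∈ cs, motive c) → motive (node a cs))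
    (t : LTree) : motive t := by
  induction t using psi.induct with
  | case1 a => exact plain a [] (by simp) rfl (by simp)
  | case2 a c rest P b ℓ R h ih ihR =>
    obtain ⟨rfl, hℓ, hR⟩ := splitAtLastSingletonParent_eq_some_iff.1 h
    exact split a c P b ℓ R hℓ hR ih fun r hr => ihR ⟨r, hr⟩
  | case3 a c b e es R h hc ih ihR =>
    exact lift a c b (e :: es) R hc (List.cons_ne_nil e es)
      (splitAtLastSingletonParent_eq_none_iff.1 h) ih fun r hr => ihR ⟨r, hr⟩
  | case4 a c b e es R h hc ih =>
    refine plain _ _ (splitAtLastSingletonParent_eq_none_iff.1 h) ?_ fun r hr => ih ⟨r, hr⟩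
    simp_all [entleafAt]
  | case5 a c rest h hne ih =>
    refine plain _ _ (splitAtLastSingletonParent_eq_none_iff.1 h) ?_ fun r hr => ih ⟨r, hr⟩
    rcases rest with _ | ⟨⟨b, _ | ⟨e, es⟩⟩, R⟩
    · rfl
    · simp [entleafAt]
    · exact (hne b e es R h rfl HEq.rfl).elim

theorem psi_node_of_split {a b : ℕ} {c ℓ : LTree} {P R : List LTree} (hℓ : ℓ.isLeaf = true)
    (hR : ∀ x ∈ R, x.isSingletonParent = false) :
    psi (node a (c :: (P ++ node b [ℓ] :: R))) =
      node a (ℓ :: psi (node b (c :: P)) :: R.map psi) := by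
  have hsplit : splitAtLastSingletonParent (P ++ node b [ℓ] :: R) = some (P, b, ℓ, R) :=
    splitAtLastSingletonParent_eq_some_iff.2 ⟨rfl, hℓ, hR⟩
  rw [psi]
  split
  next h => simp_all
  next h => simp [hsplit] at h

theorem psi_node_of_lift {a b : ℕ} {c : LTree} {es R : List LTree} (hc : c.isLeaf = true)
    (hes : es ≠ []) (hR : ∀ x ∈ node b es :: R, x.isSingletonParent = false) :
    psi (node a (c :: node b es :: R)) =
      node a ((psi (node b es)).children ++ node b [c] :: R.map psi) := by
  obtain ⟨e, es, rfl⟩ := List.exists_cons_of_ne_nil hes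
  rw [psi]
  split <;> simp_all [splitAtLastSingletonParent_eq_none_iff.2 hR]

theorem psi_node_of_plain {a : ℕ} {cs : List LTree}
    (hsp : ∀ x ∈ cs.tail, x.isSingletonParent = false) (hent : entleafAt cs = false) :
    psi (node a cs) = node a (cs.map psi) := by
  rcases cs with _ | ⟨c, rest⟩
  · rw [psi, List.map_nil]
  rw [List.tail_cons, ← splitAtLastSingletonParent_eq_none_iff] at hsp
  rw [psi]
  split
  next h => simp [hsp] at h
  next =>
    split
    · split
      next hc => simp [entleafAt, hc] at hent
      next => rw [List.attach_map_val]
    · rw [List.attach_map_val]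

@[simp] theorem label_psi (t : LTree) : (psi t).label = t.label := by
  induction t using psi_induction with
  | split a c P b ℓ R hℓ hR => rw [psi_node_of_split hℓ hR]; rfl
  | lift a c b es R hc hes hR => rw [psi_node_of_lift hc hes hR]; rfl
  | plain a cs hsp hent => rw [psi_node_of_plain hsp hent]; rfl

@[simp] theorem isLeaf_psi (t : LTree) : (psi t).isLeaf = t.isLeaf := by
  induction t using psi_induction with
  | split a c P b ℓ R hℓ hR => rw [psi_node_of_split hℓ hR]; rfl
  | lift a c b es R hc hes hR => rw [psi_node_of_lift hc hes hR]; simp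
  | plain a cs hsp hent => rw [psi_node_of_plain hsp hent]; simp

theorem children_psi_ne_nil {a : ℕ} {cs : List LTree} (h : cs ≠ []) :
    (psi (node a cs)).children ≠ [] := by
  have hleaf : (psi (node a cs)).isLeaf = false := by simpa [isLeaf_psi] using h
  exact List.isEmpty_eq_false_iff.1 hleaf

theorem psi_of_isLeaf {t : LTree} (h : t.isLeaf = true) : psi t = t := by
  rcases t with ⟨a, _ | _⟩
  · rw [psi]
  · simp at h

@[simp] theorem isSingletonParent_psi (t : LTree) :
    (psi t).isSingletonParent = t.isSingletonParent := by
  induction t using psi_induction with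
  | split a c P b ℓ R hℓ hR => rw [psi_node_of_split hℓ hR]; rcases P <;> rfl
  | lift a c b es R hc hes hR =>
    rw [psi_node_of_lift hc hes hR]
    obtain ⟨e, E, hch⟩ := List.exists_cons_of_ne_nil (children_psi_ne_nil (a := b) hes)
    rw [hch]
    rcases E <;> rfl
  | plain a cs hsp hent =>
    rw [psi_node_of_plain hsp hent]
    rcases cs with _ | ⟨c, _ | ⟨d, R⟩⟩ <;> simp [isLeaf_psi]

@[simp] theorem isLeaf_comp_psi : isLeaf ∘ psi = isLeaf := funext isLeaf_psi

@[simp] theorem isSingletonParent_comp_psi : isSingletonParent ∘ psi = isSingletonParent :=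
  funext isSingletonParent_psi

theorem map_psi_map_psi_of_forall {R : List LTree} (ih : ∀ r ∈ R, psi (psi r) = r) :
    (R.map psi).map psi = R := by
  rw [List.map_map]
  exact (List.map_congr_left ih).trans (List.map_id R)

theorem forall_isSingletonParent_map_psi {R : List LTree}
    (hR : ∀ x ∈ R, x.isSingletonParent = false) :
    ∀ x ∈ R.map psi, x.isSingletonParent = false := by
  simpa [isSingletonParent_psi] using hR

theorem psi_node_eq_node (a : ℕ) (cs : List LTree) :
    psi (node a cs) = node a (psi (node a cs)).children := by
  conv_lhs => rw [← node_label_children (psi _), label_psi, label_node]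

theorem psi_psi (t : LTree) : psi (psi t) = t := by
  induction t using psi_induction with
  | split a c P b ℓ R hℓ hR ih ihR =>
    have hR' := forall_isSingletonParent_map_psi hR
    rw [psi_node_of_split hℓ hR]
    by_cases hq : (node b (c :: P)).isSingletonParent
    · obtain ⟨rfl, hc⟩ : P = [] ∧ c.isLeaf = true := by
        rcases P with _ | ⟨_, _⟩ <;> simp_all
      have hfix : ∀ {ℓ}, ℓ.isLeaf = true → psi (node b [ℓ]) = node b [ℓ] := fun hℓ => by
        rw [psi_node_of_plain (by simp) rfl, List.map_singleton, psi_of_isLeaf hℓ]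
      rw [hfix hc, ← List.nil_append (node b [c] :: _), psi_node_of_split hc hR', hfix hℓ,
        map_psi_map_psi_of_forall ihR, List.nil_append]
    · obtain ⟨Q, hQ⟩ : ∃ Q, psi (node b (c :: P)) = node b Q := ⟨_, psi_node_eq_node b _⟩
      have hQne : Q ≠ [] := by simpa [hQ] using isLeaf_psi (node b (c :: P))
      have hQs : (node b Q).isSingletonParent = false := by
        simpa [← hQ, isSingletonParent_psi] using hq
      rw [hQ, psi_node_of_lift hℓ hQne (List.forall_mem_cons.2 ⟨hQs, hR'⟩), ← hQ, ih,
        map_psi_map_psi_of_forall ihR]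
      simp
  | lift a c b es R hc hes hR ih ihR =>
    have hR' := forall_isSingletonParent_map_psi (fun x hx => hR x (List.mem_cons_of_mem _ hx))
    rw [psi_node_of_lift hc hes hR]
    obtain ⟨e, E, hch⟩ := List.exists_cons_of_ne_nil (children_psi_ne_nil (a := b) hes)
    rw [hch, List.cons_append, psi_node_of_split hc hR', ← hch, ← psi_node_eq_node, ih,
      map_psi_map_psi_of_forall ihR]
  | plain a cs hsp hent ih =>
    rw [psi_node_of_plain hsp hent, psi_node_of_plain, map_psi_map_psi_of_forall ih]
    · simpa [← List.map_tail] using forall_isSingletonParent_map_psi hsp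
    · rcases cs with _ | ⟨c, _ | ⟨d, R⟩⟩ <;> simp_all [entleafAt, isLeaf_psi]

theorem subtrees_node (a : ℕ) (cs : List LTree) :
    (node a cs).subtrees = node a cs :: (cs.map subtrees).flatten := by
  rw [subtrees]
  simp

theorem labels_node (a : ℕ) (cs : List LTree) : (node a cs).labels = a ::ₘ (cs.map labels).sum := by
  simp only [labels, subtrees_node, List.map_cons, label_node, List.map_flatten,
    ← Multiset.cons_coe, ← Multiset.coe_join, List.map_map]
  rfl

theorem labels_psi (t : LTree) : (psi t).labels = t.labels := by
  induction t using psi_induction with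
  | split a c P b ℓ R hℓ hR ih ihR =>
    rw [psi_node_of_split hℓ hR, labels_node, labels_node]
    simp only [List.map_cons, List.map_append, List.sum_cons, List.sum_append, List.map_map,
      Function.comp_def, ih, List.map_congr_left ihR, labels_node, ← Multiset.singleton_add]
    abel
  | lift a c b es R hc hes hR ih ihR =>
    have hQ : ((psi (node b es)).children.map labels).sum = (es.map labels).sum := by
      rw [psi_node_eq_node, labels_node, labels_node] at ih
      exact (Multiset.cons_inj_right b).1 ih
    rw [psi_node_of_lift hc hes hR, labels_node, labels_node]
    simp only [List.map_cons, List.map_append, List.sum_cons, List.sum_append, List.map_map,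
      Function.comp_def, hQ, List.map_congr_left ihR, labels_node, List.map_nil, List.sum_nil,
      add_zero, ← Multiset.singleton_add]
    abel
  | plain a cs hsp hent ih =>
    rw [psi_node_of_plain hsp hent, labels_node, labels_node, List.map_map]
    exact congrArg _ (congrArg _ (List.map_congr_left ih))

/-- Both order conditions of `IsWIT` at a node, as one weakly decreasing chain: the labels of the
children from left to right, then the label of the node itself. -/
def IsIncreasing (T : LTree) : Prop :=
  ∀ t ∈ T.subtrees, (t.children.map label ++ [t.label]).IsChain (fun x y => y ≤ x)

theorem isIncreasing_node {a : ℕ} {cs : List LTree} :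
    IsIncreasing (node a cs) ↔
      (cs.map label ++ [a]).IsChain (fun x y => y ≤ x) ∧ ∀ c ∈ cs, IsIncreasing c := by
  simp only [IsIncreasing, subtrees_node, List.forall_mem_cons, List.mem_flatten, List.mem_map,
    children_node, label_node]
  grind

theorem isIncreasing_psi {t : LTree} (h : IsIncreasing t) : IsIncreasing (psi t) := by
  induction t using psi_induction with
  | split a c P b ℓ R hℓ hR ih ihR =>
    obtain ⟨hchain, hchildren⟩ := isIncreasing_node.1 h
    simp only [List.forall_mem_cons, List.forall_mem_append] at hchildren
    obtain ⟨hc, hP, hbℓ, hRinc⟩ := hchildren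
    obtain ⟨hbℓ, hℓinc⟩ := isIncreasing_node.1 hbℓ
    have hcP : ((c :: P).map label ++ [b]).IsChain (fun x y => y ≤ x) :=
      List.IsChain.left_of_append (l₂ := R.map label ++ [a]) (by simpa using hchain)
    have hbR : (b :: R.map label ++ [a]).IsChain (fun x y => y ≤ x) :=
      List.IsChain.right_of_append (l₁ := (c :: P).map label) (by simpa using hchain)
    rw [psi_node_of_split hℓ hR, isIncreasing_node]
    simp only [List.forall_mem_cons, List.forall_mem_map]
    refine ⟨?_, hℓinc ℓ (by simp), ih (isIncreasing_node.2 ⟨hcP, by simpa using ⟨hc, hP⟩⟩),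
      fun r hr => ihR r hr (hRinc r hr)⟩
    simpa [Function.comp_def, List.isChain_cons_cons] using ⟨by simpa using hbℓ, hbR⟩
  | lift a c b es R hc hes hR ih ihR =>
    obtain ⟨hchain, hchildren⟩ := isIncreasing_node.1 h
    simp only [List.map_cons, List.cons_append, List.isChain_cons_cons] at hchain
    simp only [List.forall_mem_cons] at hchildren
    obtain ⟨hbc, hbR⟩ := hchain
    obtain ⟨hcinc, hesinc, hRinc⟩ := hchildren
    have hQ := ih hesinc
    rw [psi_node_eq_node, isIncreasing_node] at hQ
    rw [psi_node_of_lift hc hes hR, isIncreasing_node]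
    simp only [List.forall_mem_append, List.forall_mem_cons, List.forall_mem_map]
    refine ⟨?_, hQ.2, isIncreasing_node.2 ⟨by simpa using hbc, by simpa using hcinc⟩,
      fun r hr => ihR r hr (hRinc r hr)⟩
    have := hQ.1.append_overlap (l₂ := [b]) (l₃ := R.map label ++ [a]) hbR (List.cons_ne_nil _ _)
    simpa [Function.comp_def] using this
  | plain a cs hsp hent ih =>
    obtain ⟨hchain, hchildren⟩ := isIncreasing_node.1 h
    rw [psi_node_of_plain hsp hent, isIncreasing_node, List.map_map, List.forall_mem_map]
    exact ⟨by simpa [Function.comp_def] using hchain, fun c hc => ih c hc (hchildren c hc)⟩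

theorem isWIT_iff {M : Multiset ℕ} {T : LTree} :
    IsWIT M T ↔ T.label = 0 ∧ T.labels = 0 ::ₘ M ∧ IsIncreasing T := by
  simp only [IsWIT, IsIncreasing, List.isChain_flip_le_append_singleton_iff, List.forall_mem_map]
  rfl

theorem isWIT_psi {M : Multiset ℕ} {T : LTree} (h : IsWIT M T) : IsWIT M (psi T) := by
  obtain ⟨h0, hM, hinc⟩ := isWIT_iff.1 h
  exact isWIT_iff.2 ⟨(label_psi T).trans h0, (labels_psi T).trans hM, isIncreasing_psi hinc⟩

section NodeSum

variable {M : Type*} [AddCommMonoid M]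

def nodeSum (f : List LTree → M) (T : LTree) : M :=
  (T.subtrees.map fun t => f t.children).sum

theorem nodeSum_node (f : List LTree → M) (a : ℕ) (cs : List LTree) :
    nodeSum f (node a cs) = f cs + (cs.map (nodeSum f)).sum := by
  simp only [nodeSum, subtrees_node, List.map_cons, children_node, List.map_flatten, List.map_map,
    Function.comp_def, List.sum_cons, List.sum_flatten]
  rfl

theorem nodeSum_of_isLeaf (f : List LTree → M) {t : LTree} (h : t.isLeaf = true) :
    nodeSum f t = f [] := by
  rcases t with ⟨a, _ | _⟩
  · simp [nodeSum_node]
  · simp at h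

theorem nodeSum_psi (f g : List LTree → M) (hf : f [] = 0) (hf₁ : ∀ ℓ, ℓ.isLeaf = true → f [ℓ] = 0)
    (hg : g [] = 0) (hg₁ : ∀ ℓ, ℓ.isLeaf = true → g [ℓ] = 0)
    (split : ∀ c P b ℓ R, ℓ.isLeaf = true → (∀ x ∈ R, x.isSingletonParent = false) →
      f (ℓ :: psi (node b (c :: P)) :: R.map psi) + g (c :: P) = g (c :: (P ++ node b [ℓ] :: R)))
    (lift : ∀ c b es R e E, c.isLeaf = true → es ≠ [] →
      (∀ x ∈ node b es :: R, x.isSingletonParent = false) →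
      f (e :: E ++ node b [c] :: R.map psi) = f (e :: E) + g (c :: node b es :: R))
    (plain : ∀ cs, (∀ x ∈ cs.tail, x.isSingletonParent = false) → entleafAt cs = false →
      f (cs.map psi) = g cs)
    (t : LTree) : nodeSum f (psi t) = nodeSum g t := by
  induction t using psi_induction with
  | split a c P b ℓ R hℓ hR ih ihR =>
    rw [psi_node_of_split hℓ hR, nodeSum_node, nodeSum_node, ← split c P b ℓ R hℓ hR]
    rw [nodeSum_node] at ih
    simp only [List.map_cons, List.sum_cons, List.map_append, List.sum_append, List.map_map,
      Function.comp_def, ih, List.map_congr_left ihR, nodeSum_of_isLeaf _ hℓ, hf, nodeSum_node,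
      hg₁ ℓ hℓ, hg, List.map_nil, List.sum_nil, zero_add, add_zero]
    abel
  | lift a c b es R hc hes hR ih ihR =>
    obtain ⟨e, E, hch⟩ := List.exists_cons_of_ne_nil (children_psi_ne_nil (a := b) hes)
    rw [psi_node_eq_node, hch, nodeSum_node, nodeSum_node] at ih
    rw [psi_node_of_lift hc hes hR, hch, nodeSum_node, nodeSum_node, lift c b es R e E hc hes hR]
    simp only [List.map_cons, List.sum_cons, List.map_append, List.sum_append, List.map_map,
      Function.comp_def, List.map_congr_left ihR, nodeSum_of_isLeaf _ hc, hf, nodeSum_node,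
      hf₁ c hc, hg, List.map_nil, List.sum_nil, zero_add, add_zero]
    rw [← ih, List.map_cons, List.sum_cons]
    abel
  | plain a cs hsp hent ih =>
    rw [psi_node_of_plain hsp hent, nodeSum_node, nodeSum_node, plain cs hsp hent, List.map_map,
      Function.comp_def, List.map_congr_left ih]

end NodeSum

def snuleafAt : List LTree → ℕ
  | c :: _ => if c.isSingletonParent then 1 else 0
  | [] => 0

def suleafAt (cs : List LTree) : ℕ := cs.tail.countP isSingletonParent

def yerleafAt (cs : List LTree) : ℕ := (cs.drop 2).countP isLeaf

def etleafAt : List LTree → Bool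
  | c :: d :: _ => c.isLeaf && d.isLeaf
  | _ => false

def syleafAt : List LTree → Bool
  | _ :: d :: _ => d.isLeaf
  | _ => false

def yintAt : List LTree → Bool
  | c :: _ => !c.isLeaf
  | _ => false

theorem countP_subtrees_eq_nodeSum (p : List LTree → Bool) (T : LTree) :
    T.subtrees.countP (fun t => p t.children) = nodeSum (fun cs => (p cs).toNat) T := by
  rw [nodeSum]
  induction T.subtrees <;> simp_all [List.countP_cons, Bool.toNat, add_comm]

theorem snuleaf_eq_nodeSum (T : LTree) :
    snuleaf T = (if T.isSingletonParent then 1 else 0) + nodeSum snuleafAt T := rfl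

theorem suleaf_eq_nodeSum (T : LTree) : suleaf T = nodeSum suleafAt T := rfl

theorem yerleaf_eq_nodeSum (T : LTree) : yerleaf T = nodeSum yerleafAt T := rfl

theorem etleaf_eq_nodeSum (T : LTree) : etleaf T = nodeSum (fun cs => (etleafAt cs).toNat) T :=
  countP_subtrees_eq_nodeSum etleafAt T

theorem entleaf_eq_nodeSum (T : LTree) :
    entleaf T = nodeSum (fun cs => (entleafAt cs).toNat) T :=
  countP_subtrees_eq_nodeSum entleafAt T

theorem syleaf_eq_nodeSum (T : LTree) : syleaf T = nodeSum (fun cs => (syleafAt cs).toNat) T :=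
  countP_subtrees_eq_nodeSum syleafAt T

theorem yint_eq_nodeSum (T : LTree) : yint T = nodeSum (fun cs => (yintAt cs).toNat) T :=
  countP_subtrees_eq_nodeSum yintAt T

theorem suleaf_psi (t : LTree) : suleaf (psi t) = entleaf t := by
  rw [suleaf_eq_nodeSum, entleaf_eq_nodeSum]
  refine nodeSum_psi _ _ rfl (fun _ _ => rfl) rfl (fun _ _ => rfl) ?_ ?_ ?_ t
  · intro c P b ℓ R _ hR
    have hR0 : R.countP isSingletonParent = 0 := List.countP_eq_zero.2 (by simpa using hR)
    rcases P with _ | ⟨c', P⟩ <;> simp [suleafAt, entleafAt, List.countP_cons, hR0, Bool.toNat]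
  · intro c b es R e E hc hes hR
    have hR0 : R.countP isSingletonParent = 0 := List.countP_eq_zero.2 (by simp_all)
    simp [suleafAt, entleafAt, List.countP_append, hR0, hc, List.isEmpty_eq_false_iff.2 hes]
  · intro cs hsp hent
    simpa [suleafAt, hent, ← List.map_tail, List.countP_eq_zero] using hsp

theorem entleaf_psi (t : LTree) : entleaf (psi t) = suleaf t := by
  rw [← suleaf_psi, psi_psi]

theorem etleaf_psi (t : LTree) : etleaf (psi t) = etleaf t := by
  rw [etleaf_eq_nodeSum, etleaf_eq_nodeSum]
  refine nodeSum_psi _ _ rfl (fun _ _ => rfl) rfl (fun _ _ => rfl) ?_ ?_ ?_ t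
  · intro c P b ℓ R _ _
    rcases P with _ | ⟨c', P⟩ <;> simp [etleafAt]
  · intro c b es R e E hc hes _
    rcases E <;> simp [etleafAt, hc, List.isEmpty_eq_false_iff.2 hes]
  · intro cs _ _
    rcases cs with _ | ⟨c, _ | ⟨d, R⟩⟩ <;> simp [etleafAt]

theorem syleaf_psi (t : LTree) : syleaf (psi t) = syleaf t := by
  rw [syleaf_eq_nodeSum, syleaf_eq_nodeSum]
  refine nodeSum_psi _ _ rfl (fun _ _ => rfl) rfl (fun _ _ => rfl) ?_ ?_ ?_ t
  · intro c P b ℓ R _ _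
    rcases P with _ | ⟨c', P⟩ <;> simp [syleafAt]
  · intro c b es R e E _ hes _
    rcases E <;> simp [syleafAt, List.isEmpty_eq_false_iff.2 hes]
  · intro cs _ _
    rcases cs with _ | ⟨c, _ | ⟨d, R⟩⟩ <;> simp [syleafAt]

theorem yint_psi (t : LTree) : yint (psi t) = yint t := by
  rw [yint_eq_nodeSum, yint_eq_nodeSum]
  refine nodeSum_psi _ _ rfl (fun _ h => by simp [yintAt, h]) rfl (fun _ h => by simp [yintAt, h])
    ?_ ?_ ?_ t
  · intro c P b ℓ R hℓ _
    simp [yintAt, hℓ]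
  · intro c b es R e E hc _ _
    simp [yintAt, hc]
  · intro cs _ _
    rcases cs with _ | ⟨c, R⟩ <;> simp [yintAt]

theorem yerleaf_psi (t : LTree) : yerleaf (psi t) = yerleaf t := by
  rw [yerleaf_eq_nodeSum, yerleaf_eq_nodeSum]
  refine nodeSum_psi _ _ rfl (fun _ _ => rfl) rfl (fun _ _ => rfl) ?_ ?_ ?_ t
  · intro c P b ℓ R _ _
    rcases P with _ | ⟨c', P⟩ <;> simp [yerleafAt, List.countP_append, add_comm]
  · intro c b es R e E _ _ _
    rcases E <;> simp [yerleafAt, List.countP_append]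
  · intro cs _ _
    simp [yerleafAt, ← List.map_drop]

theorem snuleaf_psi (t : LTree) : snuleaf (psi t) = snuleaf t := by
  rw [snuleaf_eq_nodeSum, snuleaf_eq_nodeSum, isSingletonParent_psi]
  congr 1
  have hleaf (ℓ : LTree) (h : ℓ.isLeaf = true) : snuleafAt [ℓ] = 0 := by
    simp [snuleafAt, isSingletonParent_eq_false_of_isLeaf h]
  refine nodeSum_psi _ _ rfl hleaf rfl hleaf ?_ ?_ ?_ t
  · intro c P b ℓ R hℓ _
    rcases P with _ | ⟨c', P⟩ <;> simp [snuleafAt, isSingletonParent_eq_false_of_isLeaf hℓ]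
  · intro c b es R e E hc _ _
    simp [snuleafAt, isSingletonParent_eq_false_of_isLeaf hc]
  · intro cs _ _
    rcases cs with _ | ⟨c, R⟩ <;> simp [snuleafAt]

end LTree

theorem suleaf_entleaf_involution_general
    (M : Multiset ℕ) :
    ∃ Ψ : {T : LTree // LTree.IsWIT M T} → {T : LTree // LTree.IsWIT M T},
      Function.Involutive Ψ ∧
        ∀ T : {T : LTree // LTree.IsWIT M T},
          LTree.snuleaf (Ψ T).1 = LTree.snuleaf T.1 ∧
          LTree.etleaf (Ψ T).1 = LTree.etleaf T.1 ∧
          LTree.syleaf (Ψ T).1 = LTree.syleaf T.1 ∧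
          LTree.yerleaf (Ψ T).1 = LTree.yerleaf T.1 ∧
          LTree.yint (Ψ T).1 = LTree.yint T.1 ∧
          LTree.suleaf (Ψ T).1 = LTree.entleaf T.1 ∧
          LTree.entleaf (Ψ T).1 = LTree.suleaf T.1 := by
  refine ⟨fun T => ⟨LTree.psi T.1, LTree.isWIT_psi T.2⟩,
    fun T => Subtype.ext (LTree.psi_psi T.1), fun T => ?_⟩
  exact ⟨LTree.snuleaf_psi _, LTree.etleaf_psi _, LTree.syleaf_psi _, LTree.yerleaf_psi _,
    LTree.yint_psi _, LTree.suleaf_psi _, LTree.entleaf_psi _⟩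

/-- **Theorem (the involution `Ψ`).**  For a multiset `M` of positive integers with
`|M| ≥ 2` there is an involution `Ψ` on `𝒯_M` preserving
`(snuleaf, etleaf, syleaf, yerleaf, yint)` and exchanging `suleaf ↔ entleaf`.
In particular `Ψ` restricts to an involution on `𝒜_M = {T ∈ 𝒯_M : yint T = 0}`. -/
theorem suleaf_entleaf_involution
    (M : Multiset ℕ) (hM : ∀ x ∈ M, 0 < x) (hcard : 2 ≤ Multiset.card M) :
    ∃ Ψ : {T : LTree // LTree.IsWIT M T} → {T : LTree // LTree.IsWIT M T},
      Function.Involutive Ψ ∧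
        ∀ T : {T : LTree // LTree.IsWIT M T},
          LTree.snuleaf (Ψ T).1 = LTree.snuleaf T.1 ∧
          LTree.etleaf (Ψ T).1 = LTree.etleaf T.1 ∧
          LTree.syleaf (Ψ T).1 = LTree.syleaf T.1 ∧
          LTree.yerleaf (Ψ T).1 = LTree.yerleaf T.1 ∧
          LTree.yint (Ψ T).1 = LTree.yint T.1 ∧
          LTree.suleaf (Ψ T).1 = LTree.entleaf T.1 ∧
          LTree.entleaf (Ψ T).1 = LTree.suleaf T.1 :=
  suleaf_entleaf_involution_general M
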